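/- arXiv:0704.2530 — 3 statements merged into one kernel-verified Lean document; each statement's English description precedes it below -/
import Mathlib

section
/- Let α > 0 be a real number and let n be a natural number. Then for every real x, the n-fold iterate of the operator 𝒫 applied to the function t ↦ e^{-αt} satisfies (𝒫ⁿ(e^{-α·}))(x) = Σ_{j=0}^{n} A_j^{(n)} · x^j / α^{2n-j} · e^{-αx}, where A_k^{(n)} = (2n-k)! / (2^{n-k} · k! · (n-k)!). In particular, all the iterated integrals occurring in 𝒫ⁿ(e^{-α·})(x) converge. -/
open MeasureTheory Set Finset

/-- The operator `𝒫`, defined by `(𝒫 f)(x) = ∫_x^∞ t·f(t) dt`. -/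
noncomputable def P (f : ℝ → ℝ) : ℝ → ℝ := fun x => ∫ t in Set.Ioi x, t * f t

/-- The coefficients `A_k^{(n)} = (2n-k)! / (2^{n-k} · k! · (n-k)!)`. -/
noncomputable def A (n k : ℕ) : ℝ :=
  (Nat.factorial (2 * n - k) : ℝ) /
    (2 ^ (n - k) * Nat.factorial k * Nat.factorial (n - k))

open Filter

lemma A_self (n : ℕ) : A n n = 1 := by
  unfold A
  rw [show 2 * n - n = n by omega, Nat.sub_self]
  simp [Nat.factorial_ne_zero, Nat.cast_ne_zero]

lemma A_zero_one (n : ℕ) : A (n + 1) 1 = A (n + 1) 0 := by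
  unfold A
  rw [show 2 * (n + 1) - 1 = 2 * n + 1 by omega, show (n + 1) - 1 = n by omega,
    show 2 * (n + 1) - 0 = 2 * n + 1 + 1 by omega, Nat.sub_zero]
  rw [Nat.factorial_succ (2 * n + 1), Nat.factorial_succ n]
  push_cast
  have h1 : (Nat.factorial (2 * n + 1) : ℝ) ≠ 0 := by positivity
  have h2 : (Nat.factorial n : ℝ) ≠ 0 := by positivity
  have h3 : (2 : ℝ) ^ n ≠ 0 := by positivity
  field_simp
  ring

lemma A_rec (m p : ℕ) :
    (m + 2 : ℝ) * A (m + p + 2) (m + 2) = A (m + p + 2) (m + 1) - A (m + p + 1) m := by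
  unfold A
  rw [show 2 * (m + p + 2) - (m + 2) = m + 2 * p + 2 by omega,
    show (m + p + 2) - (m + 2) = p by omega,
    show 2 * (m + p + 2) - (m + 1) = m + 2 * p + 2 + 1 by omega,
    show (m + p + 2) - (m + 1) = p + 1 by omega,
    show 2 * (m + p + 1) - m = m + 2 * p + 2 by omega,
    show (m + p + 1) - m = p + 1 by omega]
  rw [Nat.factorial_succ (m + 2 * p + 2), Nat.factorial_succ p,
    Nat.factorial_succ (m + 1), Nat.factorial_succ m, pow_succ]
  push_cast
  have h1 : (Nat.factorial (m + 2 * p + 2) : ℝ) ≠ 0 := by positivity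
  have h2 : (Nat.factorial m : ℝ) ≠ 0 := by positivity
  have h4 : (Nat.factorial p : ℝ) ≠ 0 := by positivity
  have h3 : (2 : ℝ) ^ p ≠ 0 := by positivity
  field_simp
  ring

lemma term_eq {α : ℝ} (hα : α ≠ 0) (n k : ℕ) (hk : k ≤ n) (x : ℝ) :
    A (n + 1) (k + 1) * (((k + 1 : ℕ) : ℝ) * x ^ k) / α ^ (2 * (n + 1) - (k + 1)) *
        Real.exp (-α * x) +
      A (n + 1) k * x ^ k / α ^ (2 * (n + 1) - k) * (Real.exp (-α * x) * (-α * 1)) =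
    if k = 0 then 0 else -(A n (k - 1) * x ^ k / α ^ (2 * n + 1 - k) * Real.exp (-α * x)) := by
  set e := Real.exp (-α * x) with he
  rw [show 2 * (n + 1) - (k + 1) = 2 * n + 1 - k by omega,
    show 2 * (n + 1) - k = (2 * n + 1 - k) + 1 by omega, pow_succ]
  have hE : α ^ (2 * n + 1 - k) ≠ 0 := pow_ne_zero _ hα
  match k with
  | 0 =>
    rw [if_pos rfl, A_zero_one]
    field_simp
    ring
  | m + 1 =>
    rw [if_neg (by omega)]
    obtain ⟨p, rfl⟩ : ∃ p, n = m + 1 + p := Nat.exists_eq_add_of_le hk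
    rw [show 2 * (m + 1 + p) + 1 - (m + 1) = m + 2 * p + 2 by omega] at *
    rw [show m + 1 + p + 1 = m + p + 2 by omega, show m + 1 + p = m + p + 1 by omega,
      show m + 1 + 1 = m + 2 by omega, show m + 1 - 1 = m by omega]
    have hrec := A_rec m p
    push_cast
    field_simp
    linear_combination (x ^ (m + 1) * e) * hrec

noncomputable def g (α : ℝ) (n : ℕ) : ℝ → ℝ := fun x =>
  ∑ j ∈ Finset.range (n + 1), A n j * x ^ j / α ^ (2 * n - j) * Real.exp (-α * x)

lemma g_hasDerivAt_raw (α : ℝ) (n : ℕ) (x : ℝ) :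
    HasDerivAt (g α (n + 1))
      (∑ j ∈ Finset.range (n + 2),
        (A (n + 1) j * ((j : ℝ) * x ^ (j - 1)) / α ^ (2 * (n + 1) - j) * Real.exp (-α * x) +
          A (n + 1) j * x ^ j / α ^ (2 * (n + 1) - j) * (Real.exp (-α * x) * (-α * 1)))) x := by
  apply HasDerivAt.fun_sum
  intro j _
  have hexp : HasDerivAt (fun y : ℝ => Real.exp (-α * y)) (Real.exp (-α * x) * (-α * 1)) x :=
    ((hasDerivAt_id x).const_mul (-α)).exp
  exact (((hasDerivAt_pow j x).const_mul (A (n + 1) j)).div_const _).mul hexp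

lemma gderiv_eq {α : ℝ} (hα : α ≠ 0) (n : ℕ) (x : ℝ) :
    (∑ j ∈ Finset.range (n + 2),
        (A (n + 1) j * ((j : ℝ) * x ^ (j - 1)) / α ^ (2 * (n + 1) - j) * Real.exp (-α * x) +
          A (n + 1) j * x ^ j / α ^ (2 * (n + 1) - j) * (Real.exp (-α * x) * (-α * 1)))) =
      -(x * g α n x) := by
  rw [Finset.sum_add_distrib, Finset.sum_range_succ', Finset.sum_range_succ
    (fun j => A (n + 1) j * x ^ j / α ^ (2 * (n + 1) - j) * (Real.exp (-α * x) * (-α * 1)))]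
  simp only [Nat.cast_zero, zero_mul, mul_zero, zero_div, add_zero]
  simp only [Nat.add_sub_cancel]
  rw [← add_assoc, ← Finset.sum_add_distrib]
  rw [Finset.sum_congr rfl
    (fun k hk => term_eq hα n k (Nat.lt_succ_iff.mp (Finset.mem_range.mp hk)) x)]
  rw [Finset.sum_range_succ', if_pos rfl, add_zero]
  have hrhs : -(x * g α n x) =
      (∑ m ∈ Finset.range n, -(x * (A n m * x ^ m / α ^ (2 * n - m) * Real.exp (-α * x)))) +
        -(x * (A n n * x ^ n / α ^ (2 * n - n) * Real.exp (-α * x))) := by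
    unfold g
    rw [Finset.sum_range_succ, mul_add, Finset.mul_sum, neg_add, Finset.sum_neg_distrib]
  rw [hrhs]
  congr 1
  · refine Finset.sum_congr rfl fun m _ => ?_
    rw [if_neg (by omega), show 2 * n + 1 - (m + 1) = 2 * n - m by omega,
      show m + 1 - 1 = m by omega]
    ring
  · rw [A_self, A_self, show 2 * (n + 1) - (n + 1) = n + 1 by omega,
      show 2 * n - n = n by omega, pow_succ]
    field_simp
    ring

lemma tendsto_pow_mul_exp (k : ℕ) {c : ℝ} (hc : 0 < c) :
    Tendsto (fun x : ℝ => x ^ k * Real.exp (-c * x)) atTop (nhds 0) := by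
  have h1 := (Real.tendsto_pow_mul_exp_neg_atTop_nhds_zero k).comp
    (tendsto_id.const_mul_atTop hc)
  have h2 := h1.const_mul ((1 : ℝ) / c ^ k)
  rw [mul_zero] at h2
  refine h2.congr fun x => ?_
  simp only [Function.comp, id]
  rw [mul_pow]
  field_simp

lemma integrableOn_pow_mul_exp (k : ℕ) {c : ℝ} (hc : 0 < c) (a : ℝ) :
    IntegrableOn (fun t : ℝ => t ^ k * Real.exp (-c * t)) (Ioi a) := by
  apply integrable_of_isBigO_exp_neg (half_pos hc)
  · exact ((continuous_pow k).mul (Real.continuous_exp.comp (by continuity))).continuousOn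
  · have : Tendsto (fun x : ℝ => x ^ k * Real.exp (-c * x) / Real.exp (-(c / 2) * x))
        atTop (nhds 0) := by
      refine (tendsto_pow_mul_exp k (half_pos hc)).congr fun x => ?_
      rw [eq_div_iff (Real.exp_ne_zero _), mul_assoc, ← Real.exp_add]
      congr 2
      ring
    refine (Asymptotics.isLittleO_iff_tendsto fun x hx =>
      absurd hx (Real.exp_ne_zero _)).mpr this |>.isBigO

lemma g_tendsto {α : ℝ} (hα : 0 < α) (n : ℕ) : Tendsto (g α n) atTop (nhds 0) := by
  have : Tendsto (fun x => ∑ j ∈ Finset.range (n + 1),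
      A n j / α ^ (2 * n - j) * (x ^ j * Real.exp (-α * x))) atTop (nhds 0) := by
    have h0 : (0 : ℝ) = ∑ j ∈ Finset.range (n + 1), A n j / α ^ (2 * n - j) * 0 := by simp
    rw [h0]
    exact tendsto_finset_sum _ fun j _ => (tendsto_pow_mul_exp j hα).const_mul _
  refine this.congr fun x => Finset.sum_congr rfl fun j _ => by ring

lemma g_integrable {α : ℝ} (hα : 0 < α) (n : ℕ) (a : ℝ) :
    IntegrableOn (fun t => t * g α n t) (Ioi a) := by
  have : (fun t : ℝ => t * g α n t) = fun t =>
      ∑ j ∈ Finset.range (n + 1), A n j / α ^ (2 * n - j) * (t ^ (j + 1) * Real.exp (-α * t)) := by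
    funext t
    unfold g
    rw [Finset.mul_sum]
    exact Finset.sum_congr rfl fun j _ => by ring
  rw [this]
  exact integrable_finset_sum _ fun j _ =>
    ((integrableOn_pow_mul_exp (j + 1) hα a).const_mul _)

lemma P_g {α : ℝ} (hα : 0 < α) (n : ℕ) (x : ℝ) :
    (∫ t in Ioi x, t * g α n t) = g α (n + 1) x := by
  have hderiv : ∀ t ∈ Ici x, HasDerivAt (fun y => -(g α (n + 1) y)) (t * g α n t) t := by
    intro t _
    have h := (g_hasDerivAt_raw α n t).neg
    rw [gderiv_eq hα.ne' n t, neg_neg] at h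
    exact h
  have htend : Tendsto (fun y => -(g α (n + 1) y)) atTop (nhds 0) := by
    simpa using (g_tendsto hα (n + 1)).neg
  have := integral_Ioi_of_hasDerivAt_of_tendsto' hderiv (g_integrable hα n x) htend
  rw [this]; ring


/-- `𝒫ⁿ(e^{-α·})(x) = Σ_{j=0}^{n} A_j^{(n)} · x^j / α^{2n-j} · e^{-αx}` for `α > 0`, and
all iterated integrals occurring in the `n`-fold iterate converge. -/
theorem iterate_P_exp (α : ℝ) (hα : 0 < α) (n : ℕ) :
    (∀ m < n, ∀ x : ℝ,
      IntegrableOn (fun t => t * (P^[m] (fun t => Real.exp (-α * t))) t) (Set.Ioi x)) ∧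
    (∀ x : ℝ, (P^[n] (fun t => Real.exp (-α * t))) x =
      ∑ j ∈ Finset.range (n + 1),
        A n j * x ^ j / α ^ (2 * n - j) * Real.exp (-α * x)) := by
  have hform : ∀ k : ℕ, ∀ x : ℝ, (P^[k] (fun t => Real.exp (-α * t))) x = g α k x := by
    intro k
    induction k with
    | zero => intro x; simp [g, Finset.sum_range_one, A_self]
    | succ k ih =>
      intro x
      rw [Function.iterate_succ_apply']
      have hk : P^[k] (fun t => Real.exp (-α * t)) = g α k := funext ih
      rw [hk]
      exact P_g hα k x
  refine ⟨fun m _ x => ?_, fun x => hform n x⟩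
  have hm : P^[m] (fun t => Real.exp (-α * t)) = g α m := funext (hform m)
  rw [hm]
  exact g_integrable hα m x
end

section
/- For all natural numbers n and k with 2 ≤ k ≤ n, the coefficients A_k^{(n)} = (2n-k)! / (2^{n-k} · k! · (n-k)!) satisfy the recursion k · A_k^{(n)} = A_{k-1}^{(n)} − A_{k-2}^{(n-1)}. -/
/-- For `2 ≤ k ≤ n`, the recursion `k · A_k^{(n)} = A_{k-1}^{(n)} − A_{k-2}^{(n-1)}` holds. -/
theorem A_recursion (n k : ℕ) (hk2 : 2 ≤ k) (hkn : k ≤ n) :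
    (k : ℝ) * A n k = A n (k - 1) - A (n - 1) (k - 2) := by
  obtain ⟨a, rfl⟩ : ∃ a, k = a + 2 := ⟨k - 2, by omega⟩
  obtain ⟨b, rfl⟩ : ∃ b, n = a + 2 + b := ⟨n - (a + 2), by omega⟩
  unfold A
  have e1 : 2 * (a + 2 + b) - (a + 2) = (a + 2 * b) + 2 := by omega
  have e2 : a + 2 + b - (a + 2) = b := by omega
  have e3 : a + 2 - 1 = a + 1 := by omega
  have e4 : 2 * (a + 2 + b) - (a + 1) = (a + 2 * b) + 3 := by omega
  have e5 : a + 2 + b - (a + 1) = b + 1 := by omega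
  have e6 : a + 2 - 2 = a := by omega
  have e7 : a + 2 + b - 1 = a + 1 + b := by omega
  have e8 : 2 * (a + 1 + b) - a = (a + 2 * b) + 2 := by omega
  have e9 : a + 1 + b - a = b + 1 := by omega
  rw [e1, e2, e3, e4, e5, e6, e7, e8, e9]
  have h1 : ((a + 2 * b) + 3).factorial = ((a + 2 * b) + 3) * ((a + 2 * b) + 2).factorial :=
    Nat.factorial_succ _
  have h2 : (a + 2).factorial = (a + 2) * ((a + 1) * a.factorial) := by
    rw [Nat.factorial_succ, Nat.factorial_succ]
  have h3 : (a + 1).factorial = (a + 1) * a.factorial := Nat.factorial_succ _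
  have h4 : (b + 1).factorial = (b + 1) * b.factorial := Nat.factorial_succ _
  rw [h1, h2, h3, h4]
  have fa : (a.factorial : ℝ) ≠ 0 := Nat.cast_ne_zero.2 a.factorial_ne_zero
  have fb : (b.factorial : ℝ) ≠ 0 := Nat.cast_ne_zero.2 b.factorial_ne_zero
  have p2 : (2 : ℝ) ^ b ≠ 0 := by positivity
  push_cast
  have ha1 : (a : ℝ) + 1 ≠ 0 := by positivity
  have ha2 : (a : ℝ) + 2 ≠ 0 := by positivity
  have hb1 : (b : ℝ) + 1 ≠ 0 := by positivity
  field_simp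
  ring
end

section
/- Let n ≥ 1 be an integer and let f : ℝ → ℝ be continuous with |f(t)| ≤ C·e^{−ct} for all t ≥ 0, for some constants C, c > 0. Then the n-fold iterate of 𝒫 applied to f and evaluated at 0 is given by the single integral (𝒫ⁿf)(0) = (1/(2^{n−1}·(n−1)!)) · ∫_0^∞ t^{2n−1} f(t) dt. -/
open MeasureTheory Set Filter Finset Topology

namespace PAux

lemma pow_exp_bound (m : ℕ) {b : ℝ} (hb : 0 < b) (t : ℝ) (ht : 0 ≤ t) :
    t ^ m * Real.exp (-b * t) ≤ (m.factorial * (2 / b) ^ m) * Real.exp (-(b / 2) * t) := by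
  have h1 : ((b / 2) * t) ^ m / (m.factorial : ℝ) ≤ Real.exp ((b / 2) * t) :=
    Real.pow_div_factorial_le_exp _ (by positivity) m
  have hfac : (0 : ℝ) < m.factorial := by exact_mod_cast m.factorial_pos
  have h3 : ((b / 2) ^ m) * t ^ m ≤ (m.factorial : ℝ) * Real.exp ((b / 2) * t) := by
    rw [mul_pow] at h1
    rw [div_le_iff₀ hfac] at h1
    calc (b / 2) ^ m * t ^ m ≤ Real.exp (b / 2 * t) * m.factorial := h1
      _ = (m.factorial : ℝ) * Real.exp ((b / 2) * t) := by ring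
  have h2 : t ^ m ≤ (m.factorial * (2 / b) ^ m) * Real.exp ((b / 2) * t) := by
    calc t ^ m = (2 / b) ^ m * ((b / 2) ^ m * t ^ m) := by
          rw [← mul_assoc, ← mul_pow]
          field_simp
          simp
      _ ≤ (2 / b) ^ m * ((m.factorial : ℝ) * Real.exp ((b / 2) * t)) :=
          mul_le_mul_of_nonneg_left h3 (by positivity)
      _ = (m.factorial * (2 / b) ^ m) * Real.exp ((b / 2) * t) := by ring
  calc t ^ m * Real.exp (-b * t)
      ≤ ((m.factorial * (2 / b) ^ m) * Real.exp ((b / 2) * t)) * Real.exp (-b * t) :=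
        mul_le_mul_of_nonneg_right h2 (Real.exp_pos _).le
    _ = (m.factorial * (2 / b) ^ m) * Real.exp (-(b / 2) * t) := by
        rw [mul_assoc, ← Real.exp_add]; ring_nf

lemma tendsto_pow_mul_exp (m : ℕ) {b : ℝ} (hb : 0 < b) :
    Tendsto (fun x : ℝ => x ^ m * Real.exp (-b * x)) atTop (𝓝 0) := by
  have h1 : Tendsto (fun x : ℝ => b * x) atTop atTop :=
    tendsto_id.const_mul_atTop hb
  have h2 := (Real.tendsto_pow_mul_exp_neg_atTop_nhds_zero m).comp h1
  have h3 : Tendsto (fun x : ℝ => (1 / b ^ m) * ((b * x) ^ m * Real.exp (-(b * x)))) atTop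
      (𝓝 ((1 / b ^ m) * 0)) := h2.const_mul _
  rw [mul_zero] at h3
  refine h3.congr fun x => ?_
  rw [mul_pow, neg_mul]
  field_simp

lemma integral_exp_neg_mul_Ioi {b : ℝ} (hb : 0 < b) (x : ℝ) :
    (∫ t in Ioi x, Real.exp (-b * t)) = Real.exp (-b * x) / b := by
  have hd : ∀ t ∈ Ici x, HasDerivAt (fun t => -Real.exp (-b * t) / b) (Real.exp (-b * t)) t := by
    intro t _
    have h1 : HasDerivAt (fun t : ℝ => -b * t) (-b) t := by
      simpa using (hasDerivAt_id t).const_mul (-b)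
    have h2 := (h1.exp).neg.div_const b
    refine h2.congr_deriv ?_
    field_simp
  have htend : Tendsto (fun t => -Real.exp (-b * t) / b) atTop (𝓝 0) := by
    have : Tendsto (fun t => -Real.exp (-b * t) / b) atTop (𝓝 (-0 / b)) := by
      refine Tendsto.div_const (Tendsto.neg ?_) _
      exact Real.tendsto_exp_atBot.comp (tendsto_id.const_mul_atTop_of_neg (by linarith))
    simpa using this
  have h := integral_Ioi_of_hasDerivAt_of_tendsto' hd (exp_neg_integrableOn_Ioi x hb) htend
  rw [h]
  field_simp
  ring

/-- `F f j x = ∫_{Ioi x} t^(2j+1) f t`. -/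
noncomputable def F (f : ℝ → ℝ) (j : ℕ) (x : ℝ) : ℝ := ∫ t in Ioi x, t ^ (2 * j + 1) * f t


lemma coef_id (m k : ℕ) :
    (1 / (2 ^ m * (m.factorial : ℝ))) * ((-1:ℝ)^k * (m.choose k)) / (2 * (k:ℝ) + 2)
      = (1 / (2 ^ (m+1) * ((m+1).factorial : ℝ))) * ((-1:ℝ)^k * ((m+1).choose (k+1))) := by
  have h : ((m:ℝ) + 1) * (m.choose k) = ((m+1).choose (k+1) : ℝ) * ((k:ℝ) + 1) := by
    exact_mod_cast Nat.add_one_mul_choose_eq m k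
  have hm : ((m.factorial : ℝ)) ≠ 0 := by positivity
  have h2 : (2:ℝ) ^ m ≠ 0 := by positivity
  rw [Nat.factorial_succ]
  push_cast
  field_simp
  linear_combination (2 * 2 ^ m) * h

lemma alt_sum (m : ℕ) : ∑ k ∈ range (m+1), ((-1:ℝ)^k * ((m+1).choose (k+1))) = 1 := by
  have h := Int.alternating_sum_range_choose_of_ne (n := m+1) (Nat.succ_ne_zero m)
  have h' : ∑ i ∈ range (m+2), ((-1:ℝ)^i * ((m+1).choose i)) = 0 := by exact_mod_cast h
  rw [Finset.sum_range_succ'] at h'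
  simp only [pow_zero, Nat.choose_zero_right, Nat.cast_one, one_mul, pow_succ] at h'
  have e : ∑ k ∈ range (m+1), ((-1:ℝ)^k * ((m+1).choose (k+1)))
      = -∑ k ∈ range (m+1), ((-1:ℝ)^k * (-1) * ((m+1).choose (k+1))) := by
    rw [← Finset.sum_neg_distrib]
    apply Finset.sum_congr rfl
    intros; ring
  rw [e]
  linarith [h']


section Decay

variable {f : ℝ → ℝ} {C c : ℝ} (hf : Continuous f) (hc : 0 < c) (hC : 0 ≤ C)
  (hdecay : ∀ t : ℝ, 0 ≤ t → |f t| ≤ C * Real.exp (-c * t))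

include hf hc hC hdecay

lemma integrableOn_pow_f (m : ℕ) (x : ℝ) : IntegrableOn (fun t => t ^ m * f t) (Ioi x) := by
  apply integrable_of_isBigO_exp_neg (half_pos hc) ((continuous_pow m).mul hf).continuousOn
  apply Asymptotics.IsBigO.of_bound (C * (m.factorial * (2 / c) ^ m))
  filter_upwards [eventually_ge_atTop (0 : ℝ)] with t ht
  simp only [Pi.mul_apply]
  rw [Real.norm_eq_abs, Real.norm_eq_abs, Real.abs_exp, abs_mul, abs_pow, abs_of_nonneg ht]
  calc t ^ m * |f t| ≤ t ^ m * (C * Real.exp (-c * t)) :=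
        mul_le_mul_of_nonneg_left (hdecay t ht) (by positivity)
    _ = C * (t ^ m * Real.exp (-c * t)) := by ring
    _ ≤ C * ((m.factorial * (2 / c) ^ m) * Real.exp (-(c / 2) * t)) :=
        mul_le_mul_of_nonneg_left (pow_exp_bound m hc t ht) hC
    _ = C * (m.factorial * (2 / c) ^ m) * Real.exp (-(c / 2) * t) := by ring

lemma F_sub (j : ℕ) (x y : ℝ) :
    F f j y = F f j x - ∫ t in x..y, t ^ (2 * j + 1) * f t := by
  have key : ∀ x y : ℝ, x ≤ y →
      F f j x = (∫ t in x..y, t ^ (2 * j + 1) * f t) + F f j y := by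
    intro x y hxy
    rw [intervalIntegral.integral_of_le hxy, F, F,
      ← setIntegral_union (Ioc_disjoint_Ioi le_rfl) measurableSet_Ioi
        ((integrableOn_pow_f hf hc hC hdecay _ x).mono_set Ioc_subset_Ioi_self)
        ((integrableOn_pow_f hf hc hC hdecay _ y)),
      Ioc_union_Ioi_eq_Ioi hxy]
  rcases le_total x y with h | h
  · rw [key x y h]; ring
  · rw [key y x h, intervalIntegral.integral_symm]; ring

lemma F_hasDerivAt (j : ℕ) (x : ℝ) :
    HasDerivAt (F f j) (-(x ^ (2 * j + 1) * f x)) x := by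
  have hcont : Continuous fun t : ℝ => t ^ (2 * j + 1) * f t := (continuous_pow _).mul hf
  have hD : HasDerivAt (fun y => F f j 0 - ∫ t in (0:ℝ)..y, t ^ (2 * j + 1) * f t)
      (-(x ^ (2 * j + 1) * f x)) x := by
    have h := intervalIntegral.integral_hasDerivAt_right
      (hcont.intervalIntegrable 0 x)
      (hcont.stronglyMeasurableAtFilter volume (𝓝 x))
      hcont.continuousAt
    exact h.const_sub (F f j 0)
  exact hD.congr_of_eventuallyEq
    (Filter.Eventually.of_forall fun y => F_sub hf hc hC hdecay j 0 y)

lemma F_continuous (j : ℕ) : Continuous (F f j) :=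
  continuous_iff_continuousAt.2 fun x => (F_hasDerivAt hf hc hC hdecay j x).continuousAt

lemma F_le (j : ℕ) : ∃ K : ℝ, 0 ≤ K ∧
    ∀ x, 0 ≤ x → |F f j x| ≤ K * Real.exp (-(c / 2) * x) := by
  set m := 2 * j + 1
  set M : ℝ := C * (m.factorial * (2 / c) ^ m) with hM
  have hM0 : 0 ≤ M := by positivity
  refine ⟨M / (c / 2), by positivity, fun x hx => ?_⟩
  have hbound : ∀ᵐ t ∂(volume.restrict (Ioi x)), ‖t ^ m * f t‖ ≤ M * Real.exp (-(c / 2) * t) := by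
    rw [ae_restrict_iff' measurableSet_Ioi]
    refine Filter.Eventually.of_forall fun t ht => ?_
    have ht0 : (0:ℝ) ≤ t := le_of_lt (lt_of_le_of_lt hx ht)
    rw [Real.norm_eq_abs, abs_mul, abs_pow, abs_of_nonneg ht0]
    calc t ^ m * |f t| ≤ t ^ m * (C * Real.exp (-c * t)) :=
          mul_le_mul_of_nonneg_left (hdecay t ht0) (by positivity)
      _ = C * (t ^ m * Real.exp (-c * t)) := by ring
      _ ≤ C * ((m.factorial * (2 / c) ^ m) * Real.exp (-(c / 2) * t)) :=
          mul_le_mul_of_nonneg_left (pow_exp_bound m hc t ht0) hC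
      _ = M * Real.exp (-(c / 2) * t) := by rw [hM]; ring
  have hint : Integrable (fun t => M * Real.exp (-(c / 2) * t)) (volume.restrict (Ioi x)) :=
    (exp_neg_integrableOn_Ioi x (half_pos hc)).const_mul M
  have h := norm_integral_le_of_norm_le hint hbound
  rw [F]
  refine le_trans (le_of_eq (Real.norm_eq_abs _).symm) (le_trans h ?_)
  rw [MeasureTheory.integral_const_mul, integral_exp_neg_mul_Ioi (half_pos hc) x]
  rw [div_mul_eq_mul_div, mul_comm]
  exact le_of_eq (by ring)

lemma tendsto_pow_F (m j : ℕ) :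
    Tendsto (fun x => x ^ m * F f j x) atTop (𝓝 0) := by
  obtain ⟨K, hK0, hK⟩ := F_le hf hc hC hdecay j
  have hg : Tendsto (fun x : ℝ => K * (x ^ m * Real.exp (-(c / 2) * x))) atTop (𝓝 (K * 0)) :=
    (tendsto_pow_mul_exp m (half_pos hc)).const_mul K
  rw [mul_zero] at hg
  apply squeeze_zero_norm' _ hg
  filter_upwards [eventually_ge_atTop (0 : ℝ)] with x hx
  rw [Real.norm_eq_abs, abs_mul, abs_pow, abs_of_nonneg hx]
  calc x ^ m * |F f j x| ≤ x ^ m * (K * Real.exp (-(c / 2) * x)) :=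
        mul_le_mul_of_nonneg_left (hK x hx) (by positivity)
    _ = K * (x ^ m * Real.exp (-(c / 2) * x)) := by ring

lemma integrableOn_pow_F (m j : ℕ) (x : ℝ) :
    IntegrableOn (fun s => s ^ m * F f j s) (Ioi x) := by
  obtain ⟨K, hK0, hK⟩ := F_le hf hc hC hdecay j
  apply integrable_of_isBigO_exp_neg (show (0:ℝ) < c / 4 by linarith)
    ((continuous_pow m).mul (F_continuous hf hc hC hdecay j)).continuousOn
  apply Asymptotics.IsBigO.of_bound (K * (m.factorial * (2 / (c / 2)) ^ m))
  filter_upwards [eventually_ge_atTop (0 : ℝ)] with s hs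
  simp only [Pi.mul_apply]
  rw [Real.norm_eq_abs, Real.norm_eq_abs, Real.abs_exp, abs_mul, abs_pow, abs_of_nonneg hs]
  have h1 : s ^ m * |F f j s| ≤ K * (s ^ m * Real.exp (-(c / 2) * s)) := by
    calc s ^ m * |F f j s| ≤ s ^ m * (K * Real.exp (-(c / 2) * s)) :=
          mul_le_mul_of_nonneg_left (hK s hs) (by positivity)
      _ = K * (s ^ m * Real.exp (-(c / 2) * s)) := by ring
  refine le_trans h1 ?_
  have h2 := pow_exp_bound m (half_pos hc) s hs
  have h3 : (c / 2) / 2 = c / 4 := by ring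
  rw [h3] at h2
  calc K * (s ^ m * Real.exp (-(c / 2) * s))
      ≤ K * ((m.factorial * (2 / (c / 2)) ^ m) * Real.exp (-(c / 4) * s)) :=
        mul_le_mul_of_nonneg_left h2 hK0
    _ = K * (m.factorial * (2 / (c / 2)) ^ m) * Real.exp (-(c / 4) * s) := by ring



lemma IBP (k j : ℕ) (x : ℝ) :
    (∫ s in Ioi x, s ^ (2 * k + 1) * F f j s)
      = (F f (j + k + 1) x - x ^ (2 * k + 2) * F f j x) / (2 * (k : ℝ) + 2) := by
  have hd : (0:ℝ) < 2 * (k : ℝ) + 2 := by positivity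
  have hderiv : ∀ s ∈ Ici x, HasDerivAt (fun s => s ^ (2 * k + 2) * F f j s / (2 * (k : ℝ) + 2))
      (s ^ (2 * k + 1) * F f j s - s ^ (2 * (j + k + 1) + 1) * f s / (2 * (k : ℝ) + 2)) s := by
    intro s _
    have h1 := F_hasDerivAt hf hc hC hdecay j s
    have h2 : HasDerivAt (fun s : ℝ => s ^ (2 * k + 2)) ((2 * (k:ℝ) + 2) * s ^ (2 * k + 1)) s := by
      have := hasDerivAt_pow (2 * k + 2) s
      refine this.congr_deriv ?_
      rw [show 2 * k + 2 - 1 = 2 * k + 1 from by omega]; push_cast; ring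
    have h3 := (h2.mul h1).div_const (2 * (k : ℝ) + 2)
    refine h3.congr_deriv ?_
    rw [show 2 * (j + k + 1) + 1 = (2 * k + 2) + (2 * j + 1) from by omega, pow_add]
    field_simp
    ring
  have htend : Tendsto (fun s => s ^ (2 * k + 2) * F f j s / (2 * (k : ℝ) + 2)) atTop (𝓝 0) := by
    have := (tendsto_pow_F hf hc hC hdecay (2 * k + 2) j).div_const (2 * (k : ℝ) + 2)
    simpa using this
  have hA : IntegrableOn (fun s => s ^ (2 * k + 1) * F f j s) (Ioi x) :=
    integrableOn_pow_F hf hc hC hdecay (2 * k + 1) j x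
  have hB : IntegrableOn (fun s => s ^ (2 * (j + k + 1) + 1) * f s / (2 * (k : ℝ) + 2)) (Ioi x) :=
    (integrableOn_pow_f hf hc hC hdecay (2 * (j + k + 1) + 1) x).div_const _
  have hint : IntegrableOn (fun s => s ^ (2 * k + 1) * F f j s
      - s ^ (2 * (j + k + 1) + 1) * f s / (2 * (k : ℝ) + 2)) (Ioi x) := hA.sub hB
  have h := integral_Ioi_of_hasDerivAt_of_tendsto' hderiv hint htend
  rw [MeasureTheory.integral_sub hA hB] at h
  have hBval : (∫ s in Ioi x, s ^ (2 * (j + k + 1) + 1) * f s / (2 * (k : ℝ) + 2))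
      = F f (j + k + 1) x / (2 * (k : ℝ) + 2) := by
    rw [MeasureTheory.integral_div]
    rfl
  rw [hBval] at h
  rw [sub_div]
  linarith [h]


lemma key (m : ℕ) : ∀ x : ℝ, 0 ≤ x →
    (P^[m+1] f) x = (1 / (2 ^ m * (m.factorial : ℝ))) *
      ∑ k ∈ range (m+1), ((-1:ℝ)^k * (m.choose k) * x ^ (2*k)) * F f (m-k) x := by
  induction m with
  | zero =>
    intro x hx
    simp only [Function.iterate_one, P, Nat.factorial_zero, pow_zero, Nat.cast_one,
      Finset.sum_range_one, Nat.choose_self, mul_one, one_mul, Nat.zero_sub, F]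
    norm_num
    apply MeasureTheory.setIntegral_congr_fun measurableSet_Ioi
    intro t _
    norm_num
  | succ m IH =>
    intro x hx
    have hstep : (P^[m+1+1] f) x = ∫ s in Ioi x, s * (P^[m+1] f) s := by
      rw [Function.iterate_succ_apply']
      rfl
    rw [hstep]
    have hcongr : (∫ s in Ioi x, s * (P^[m+1] f) s)
        = ∫ s in Ioi x, (1 / (2 ^ m * (m.factorial : ℝ))) *
            ∑ k ∈ range (m+1), ((-1:ℝ)^k * (m.choose k)) * (s ^ (2*k+1) * F f (m-k) s) := by
      apply MeasureTheory.setIntegral_congr_fun measurableSet_Ioi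
      intro s hs
      dsimp only
      rw [IH s (le_of_lt (lt_of_le_of_lt hx hs))]
      simp only [Finset.mul_sum]
      apply Finset.sum_congr rfl
      intro k hk
      ring
    rw [hcongr, MeasureTheory.integral_const_mul,
      MeasureTheory.integral_finset_sum _ (fun k _ =>
        ((integrableOn_pow_F hf hc hC hdecay (2*k+1) (m-k) x).const_mul _))]
    simp only [MeasureTheory.integral_const_mul]
    have hIBP : ∀ k ∈ range (m+1),
        ((-1:ℝ)^k * (m.choose k)) * ∫ s in Ioi x, s ^ (2*k+1) * F f (m-k) s
          = ((-1:ℝ)^k * (m.choose k)) *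
            ((F f (m+1) x - x ^ (2*k+2) * F f (m-k) x) / (2*(k:ℝ)+2)) := by
      intro k hk
      rw [IBP hf hc hC hdecay k (m-k) x]
      have hmk : m - k + k + 1 = m + 1 := by
        have := Finset.mem_range.mp hk; omega
      rw [hmk]
    rw [Finset.sum_congr rfl hIBP]
    have e1 : (1 / (2 ^ m * (m.factorial : ℝ))) *
        ∑ k ∈ range (m+1), ((-1:ℝ)^k * (m.choose k)) *
          ((F f (m+1) x - x ^ (2*k+2) * F f (m-k) x) / (2*(k:ℝ)+2))
        = (1 / (2 ^ (m+1) * ((m+1).factorial : ℝ))) *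
          ∑ k ∈ range (m+1), ((-1:ℝ)^k * ((m+1).choose (k+1))) *
            (F f (m+1) x - x ^ (2*k+2) * F f (m-k) x) := by
      rw [Finset.mul_sum, Finset.mul_sum]
      apply Finset.sum_congr rfl
      intro k hk
      have hco := coef_id m k
      calc (1 / (2 ^ m * (m.factorial : ℝ))) * (((-1:ℝ)^k * (m.choose k)) *
              ((F f (m+1) x - x ^ (2*k+2) * F f (m-k) x) / (2*(k:ℝ)+2)))
          = ((1 / (2 ^ m * (m.factorial : ℝ))) * ((-1:ℝ)^k * (m.choose k)) / (2*(k:ℝ)+2)) *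
              (F f (m+1) x - x ^ (2*k+2) * F f (m-k) x) := by ring
        _ = ((1 / (2 ^ (m+1) * ((m+1).factorial : ℝ))) * ((-1:ℝ)^k * ((m+1).choose (k+1)))) *
              (F f (m+1) x - x ^ (2*k+2) * F f (m-k) x) := by rw [hco]
        _ = (1 / (2 ^ (m+1) * ((m+1).factorial : ℝ))) * (((-1:ℝ)^k * ((m+1).choose (k+1))) *
              (F f (m+1) x - x ^ (2*k+2) * F f (m-k) x)) := by ring
    rw [e1]
    have e2 : ∑ k ∈ range (m+1), ((-1:ℝ)^k * ((m+1).choose (k+1))) *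
          (F f (m+1) x - x ^ (2*k+2) * F f (m-k) x)
        = (∑ k ∈ range (m+1), ((-1:ℝ)^k * ((m+1).choose (k+1)))) * F f (m+1) x
          - ∑ k ∈ range (m+1), ((-1:ℝ)^k * ((m+1).choose (k+1))) *
              (x ^ (2*k+2) * F f (m-k) x) := by
      simp only [mul_sub]
      rw [Finset.sum_sub_distrib, ← Finset.sum_mul]
    rw [e2, alt_sum m, one_mul]
    conv_rhs => rw [Finset.sum_range_succ']
    have e3 : ∀ k ∈ range (m+1),
        ((-1:ℝ)^(k+1) * ((m+1).choose (k+1)) * x ^ (2*(k+1))) * F f (m+1-(k+1)) x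
          = -(((-1:ℝ)^k * ((m+1).choose (k+1))) * (x ^ (2*k+2) * F f (m-k) x)) := by
      intro k hk
      have h1 : m + 1 - (k + 1) = m - k := by omega
      have h2 : 2*(k+1) = 2*k+2 := by omega
      rw [h1, h2]
      ring
    rw [Finset.sum_congr rfl e3, Finset.sum_neg_distrib]
    simp only [Nat.mul_zero, pow_zero, Nat.choose_zero_right, Nat.cast_one, one_mul, mul_one,
      Nat.sub_zero]
    ring

end Decay

end PAux

/-- For `n ≥ 1` and `f` continuous with exponential decay `|f(t)| ≤ C·e^{−ct}` on `[0,∞)`,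
`(𝒫ⁿf)(0) = (1/(2^{n−1}·(n−1)!)) · ∫_0^∞ t^{2n−1} f(t) dt`. -/
theorem P_iterate_eval_zero (n : ℕ) (hn : 1 ≤ n) (f : ℝ → ℝ) (hf : Continuous f)
    (C c : ℝ) (hC : 0 < C) (hc : 0 < c)
    (hdecay : ∀ t : ℝ, 0 ≤ t → |f t| ≤ C * Real.exp (-c * t)) :
    (P^[n] f) 0 =
      (1 / (2 ^ (n - 1) * Nat.factorial (n - 1))) *
        ∫ t in Set.Ioi (0 : ℝ), t ^ (2 * n - 1) * f t := by
  obtain ⟨m, rfl⟩ : ∃ m, n = m + 1 := ⟨n - 1, (Nat.succ_pred_eq_of_pos hn).symm⟩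
  have h := PAux.key (f := f) (C := C) (c := c) hf hc hC.le hdecay m 0 le_rfl
  rw [h]
  have hsum : ∑ k ∈ Finset.range (m+1),
      ((-1:ℝ)^k * (m.choose k) * (0:ℝ) ^ (2*k)) * PAux.F f (m-k) 0 = PAux.F f m 0 := by
    rw [Finset.sum_eq_single 0]
    · simp
    · intro k _ hk0
      have hz : (0:ℝ) ^ (2*k) = 0 := by
        apply zero_pow; omega
      simp [hz]
    · intro hmem
      exact absurd (Finset.mem_range.mpr (Nat.succ_pos m)) hmem
  rw [hsum, PAux.F]
  have h1 : m + 1 - 1 = m := by omega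
  have h2 : 2 * (m + 1) - 1 = 2 * m + 1 := by omega
  rw [h1, h2]
end
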